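/- Let Δ be a set of variable names and Γ a set of special names. If the call-by-name translation satisfies ⟦t⟧_a = N_{Δ⊎Γ}⟨x̄⟨c⟩⟩ for some non-blocking context N_{Δ⊎Γ} with x ∉ Δ, then there exist a set of variable names Σ ⊆ Δ and a weak head evaluation context E_Σ such that t = E_Σ⟨x⟩ (and x ∉ Σ). -/
import Mathlib


/-! ## Names: variable names (inl) and special names (inr) -/

abbrev Name := ℕ ⊕ ℕ

def NV (x : ℕ) : Name := Sum.inl x   -- variable name
def NS (a : ℕ) : Name := Sum.inr a   -- special name

/-! ## The π-calculus fragment -/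

inductive Proc : Type
  | nil : Proc
  | out1 : Name → Name → Proc                -- x̄⟨y⟩
  | out2 : Name → Name → Name → Proc         -- x̄⟨y,z⟩
  | nu : Name → Proc → Proc                  -- νx P
  | inp : Name → Name → Name → Proc → Proc   -- x(y,z).P  (binds y,z)
  | rin : Name → Name → Proc → Proc          -- !x(y).P   (binds y)
  | par : Proc → Proc → Proc
  deriving DecidableEq

namespace Proc

def fn : Proc → Finset Name
  | nil => ∅
  | out1 x y => {x, y}
  | out2 x y z => {x, y, z}
  | nu x P => P.fn.erase x
  | inp x y z P => insert x ((P.fn.erase y).erase z)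
  | rin x y P => insert x (P.fn.erase y)
  | par P Q => P.fn ∪ Q.fn

/-- Name-for-name substitution `P{n/o}` (replacing `o` by `n`), respecting shadowing. -/
def subst : Proc → Name → Name → Proc
  | nil, _, _ => nil
  | out1 x y, o, n => out1 (if x = o then n else x) (if y = o then n else y)
  | out2 x y z, o, n =>
      out2 (if x = o then n else x) (if y = o then n else y) (if z = o then n else z)
  | nu x P, o, n => if x = o then nu x P else nu x (P.subst o n)
  | inp x y z P, o, n =>
      inp (if x = o then n else x) y z (if y = o ∨ z = o then P else P.subst o n)
  | rin x y P, o, n => rin (if x = o then n else x) y (if y = o then P else P.subst o n)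
  | par P Q, o, n => par (P.subst o n) (Q.subst o n)

end Proc

/-! ## Non-blocking contexts -/

inductive NCtx : Type
  | hole : NCtx
  | parL : NCtx → Proc → NCtx
  | parR : Proc → NCtx → NCtx
  | nu : Name → NCtx → NCtx

namespace NCtx

def fill : NCtx → Proc → Proc
  | hole, P => P
  | parL N Q, P => Proc.par (N.fill P) Q
  | parR Q N, P => Proc.par Q (N.fill P)
  | nu x N, P => Proc.nu x (N.fill P)

/-- The names bound by the context above the hole. -/
def bnd : NCtx → Finset Name
  | hole => ∅
  | parL N _ => N.bnd
  | parR _ N => N.bnd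
  | nu x N => insert x N.bnd

/-- Free names of a context (with `fn ⟨·⟩ = ∅`). -/
def fnc : NCtx → Finset Name
  | hole => ∅
  | parL N Q => N.fnc ∪ Q.fn
  | parR Q N => Q.fn ∪ N.fnc
  | nu x N => N.fnc.erase x

end NCtx

/-! ## Structural congruence (including α-renaming, since terms are taken up to α) -/

inductive Scong : Proc → Proc → Prop
  | refl (P) : Scong P P
  | symm {P Q} : Scong P Q → Scong Q P
  | trans {P Q R} : Scong P Q → Scong Q R → Scong P R
  | parL {P P'} (Q) : Scong P P' → Scong (Proc.par P Q) (Proc.par P' Q)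
  | parR (P) {Q Q'} : Scong Q Q' → Scong (Proc.par P Q) (Proc.par P Q')
  | nu (x) {P Q} : Scong P Q → Scong (Proc.nu x P) (Proc.nu x Q)
  | parNil (P) : Scong (Proc.par P Proc.nil) P
  | parAssoc (P Q R) : Scong (Proc.par P (Proc.par Q R)) (Proc.par (Proc.par P Q) R)
  | parComm (P Q) : Scong (Proc.par P Q) (Proc.par Q P)
  | nuNil (x) : Scong (Proc.nu x Proc.nil) Proc.nil
  | scope {x P Q} : x ∉ P.fn → Scong (Proc.par P (Proc.nu x Q)) (Proc.nu x (Proc.par P Q))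
  | nuComm (x y P) : Scong (Proc.nu x (Proc.nu y P)) (Proc.nu y (Proc.nu x P))
  | alphaNu {x y P} : y ∉ P.fn → Scong (Proc.nu x P) (Proc.nu y (P.subst x y))
  | alphaInpL {x y y' z P} : y' ∉ P.fn → y' ≠ z →
      Scong (Proc.inp x y z P) (Proc.inp x y' z (P.subst y y'))
  | alphaInpR {x y z z' P} : z' ∉ P.fn → z' ≠ y →
      Scong (Proc.inp x y z P) (Proc.inp x y z' (P.subst z z'))
  | alphaRin {x y z P} : z ∉ P.fn → Scong (Proc.rin x y P) (Proc.rin x z (P.subst y z))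

/-! ## Reduction at a distance (⇒⊗ and ⇒!) -/

inductive RedM : Proc → Proc → Prop
  | step (N M : NCtx) (x y z y' z' : Name) (P : Proc)
      (hx : x ∉ N.bnd ∪ M.bnd)
      (h1 : Disjoint N.bnd M.bnd)
      (h2 : Disjoint N.bnd P.fn)
      (h3 : Disjoint N.fnc M.bnd) :
      RedM (Proc.par (N.fill (Proc.out2 x y z)) (M.fill (Proc.inp x y' z' P)))
           (M.fill (N.fill ((P.subst y' y).subst z' z)))
  | ctx (N : NCtx) {P Q : Proc} : RedM P Q → RedM (N.fill P) (N.fill Q)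

inductive RedE : Proc → Proc → Prop
  | step (N M : NCtx) (x y z : Name) (P : Proc)
      (hx : x ∉ N.bnd ∪ M.bnd)
      (h1 : Disjoint N.bnd M.bnd)
      (h2 : Disjoint N.bnd P.fn)
      (h3 : Disjoint N.fnc M.bnd) :
      RedE (Proc.par (N.fill (Proc.out1 x y)) (M.fill (Proc.rin x z P)))
           (M.fill (N.fill (Proc.par (P.subst z y) (Proc.rin x z P))))
  | ctx (N : NCtx) {P Q : Proc} : RedE P Q → RedE (N.fill P) (N.fill Q)

/-! ## Ordinary reduction (→⊗ and →!): closed under non-blocking contexts and ≡ -/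

inductive StepM : Proc → Proc → Prop
  | beta (x y z y' z' : Name) (Q : Proc) :
      StepM (Proc.par (Proc.out2 x y z) (Proc.inp x y' z' Q)) ((Q.subst y' y).subst z' z)
  | ctx (N : NCtx) {P Q : Proc} : StepM P Q → StepM (N.fill P) (N.fill Q)
  | congr {P P' Q Q'} : Scong P P' → StepM P' Q' → Scong Q' Q → StepM P Q

inductive StepE : Proc → Proc → Prop
  | beta (x y z : Name) (Q : Proc) :
      StepE (Proc.par (Proc.out1 x y) (Proc.rin x z Q)) (Proc.par (Q.subst z y) (Proc.rin x z Q))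
  | ctx (N : NCtx) {P Q : Proc} : StepE P Q → StepE (N.fill P) (N.fill Q)
  | congr {P P' Q Q'} : Scong P P' → StepE P' Q' → Scong Q' Q → StepE P Q

/-! ## The linear substitution calculus -/

inductive Tm : Type
  | var : ℕ → Tm
  | lam : ℕ → Tm → Tm
  | app : Tm → Tm → Tm
  | sub : Tm → ℕ → Tm → Tm    -- t[x/s]
  deriving DecidableEq

namespace Tm

def fv : Tm → Finset ℕ
  | var x => {x}
  | lam x t => t.fv.erase x
  | app t s => t.fv ∪ s.fv
  | sub t x s => t.fv.erase x ∪ s.fv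

/-- Variable-for-variable renaming `t{n/o}`, respecting shadowing. -/
def rename : Tm → ℕ → ℕ → Tm
  | var x, o, n => var (if x = o then n else x)
  | lam x t, o, n => if x = o then lam x t else lam x (t.rename o n)
  | app t s, o, n => app (t.rename o n) (s.rename o n)
  | sub t x s, o, n =>
      if x = o then sub t x (s.rename o n) else sub (t.rename o n) x (s.rename o n)

def isValue : Tm → Prop
  | var _ => True
  | lam _ _ => True
  | _ => False

end Tm

def fvN (t : Tm) : Finset Name := t.fv.image NV

/-- α-equivalence of terms of the linear substitution calculus. -/
inductive Aeq : Tm → Tm → Prop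
  | refl (t) : Aeq t t
  | symm {t s} : Aeq t s → Aeq s t
  | trans {t s u} : Aeq t s → Aeq s u → Aeq t u
  | lamCongr (x) {t t'} : Aeq t t' → Aeq (Tm.lam x t) (Tm.lam x t')
  | appCongr {t t' s s'} : Aeq t t' → Aeq s s' → Aeq (Tm.app t s) (Tm.app t' s')
  | subCongr (x) {t t' s s'} : Aeq t t' → Aeq s s' →
      Aeq (Tm.sub t x s) (Tm.sub t' x s')
  | lamAlpha {x y t} : y ∉ t.fv → Aeq (Tm.lam x t) (Tm.lam y (t.rename x y))
  | subAlpha {x y t s} : y ∉ t.fv → Aeq (Tm.sub t x s) (Tm.sub (t.rename x y) y s)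

/-! ## Weak head evaluation contexts and substitution contexts -/

inductive ECtx : Type
  | hole : ECtx
  | app : ECtx → Tm → ECtx
  | sub : ECtx → ℕ → Tm → ECtx
  deriving DecidableEq

namespace ECtx

def fill : ECtx → Tm → Tm
  | hole, t => t
  | app E s, t => Tm.app (E.fill t) s
  | sub E x s, t => Tm.sub (E.fill t) x s

/-- Variables captured by the context. -/
def bnd : ECtx → Finset ℕ
  | hole => ∅
  | app E _ => E.bnd
  | sub E x _ => insert x E.bnd

/-- Substitution contexts `L ::= ⟨·⟩ | L[x/t]`. -/
def isSub : ECtx → Prop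
  | hole => True
  | app _ _ => False
  | sub E _ _ => E.isSub

end ECtx

/-! ## Linear weak head reduction -/

inductive StepDb : Tm → Tm → Prop
  | step (E L : ECtx) (x : ℕ) (t s : Tm)
      (hL : L.isSub) (hx : x ∉ L.bnd) (hfv : Disjoint s.fv L.bnd) :
      StepDb (E.fill (Tm.app (L.fill (Tm.lam x t)) s)) (E.fill (L.fill (Tm.sub t x s)))

inductive StepLs : Tm → Tm → Prop
  | step (E E' : ECtx) (x : ℕ) (s : Tm)
      (hx : x ∉ E'.bnd) (hfv : Disjoint s.fv E'.bnd) :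
      StepLs (E.fill (Tm.sub (E'.fill (Tm.var x)) x s)) (E.fill (Tm.sub (E'.fill s) x s))

def StepWh (t s : Tm) : Prop := StepDb t s ∨ StepLs t s

/-! ## The call-by-name translation (relational, up to choice of fresh names) -/

inductive Cbn : Tm → ℕ → Proc → Prop
  | var (x a : ℕ) : Cbn (Tm.var x) a (Proc.out1 (NV x) (NS a))
  | lam {x t a b P} : b ≠ a → Cbn t b P →
      Cbn (Tm.lam x t) a (Proc.inp (NS a) (NV x) (NS b) P)
  | app {t s : Tm} {a b c x : ℕ} {P Q : Proc} :
      b ≠ a → x ∉ t.fv → x ∉ s.fv →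
      Cbn t b P → Cbn s c Q →
      Cbn (Tm.app t s) a
        (Proc.nu (NS b) (Proc.nu (NV x)
          (Proc.par (Proc.par P (Proc.out2 (NS b) (NV x) (NS a)))
                    (Proc.rin (NV x) (NS c) Q))))
  | sub {t s : Tm} {x a b : ℕ} {P Q : Proc} :
      x ∉ s.fv → Cbn t a P → Cbn s b Q →
      Cbn (Tm.sub t x s) a (Proc.nu (NV x) (Proc.par P (Proc.rin (NV x) (NS b) Q)))

/-! ## The value substitution kernel -/

mutual
  inductive VTm : Type
    | val : VVal → VTm
    | app : VVal → VTm → VTm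
    | sub : VTm → ℕ → VTm → VTm   -- t[x/s]
  inductive VVal : Type
    | var : ℕ → VVal
    | lam : ℕ → VTm → VVal
end

mutual
  def VTm.fv : VTm → Finset ℕ
    | .val v => v.fv
    | .app v t => v.fv ∪ t.fv
    | .sub t x s => t.fv.erase x ∪ s.fv
  def VVal.fv : VVal → Finset ℕ
    | .var x => {x}
    | .lam x t => t.fv.erase x
end

def fvNT (t : VTm) : Finset Name := t.fv.image NV
def fvNV (v : VVal) : Finset Name := v.fv.image NV

/-! Evaluation contexts of the kernel -/

inductive VECtx : Type
  | hole : VECtx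
  | appR : VVal → VECtx → VECtx          -- v E
  | subIn : VTm → ℕ → VECtx → VECtx      -- t[x/E]
  | subL : VECtx → ℕ → VTm → VECtx       -- E[x/t]

namespace VECtx

def fill : VECtx → VTm → VTm
  | hole, t => t
  | appR v E, t => VTm.app v (E.fill t)
  | subIn u x E, t => VTm.sub u x (E.fill t)
  | subL E x u, t => VTm.sub (E.fill t) x u

def bnd : VECtx → Finset ℕ
  | hole => ∅
  | appR _ E => E.bnd
  | subIn _ _ E => E.bnd
  | subL E x _ => insert x E.bnd

/-- Substitution contexts `L ::= ⟨·⟩ | L[x/t]`. -/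
def isSub : VECtx → Prop
  | hole => True
  | appR _ _ => False
  | subIn _ _ _ => False
  | subL E _ _ => E.isSub

end VECtx

/-- Applicative contexts `A_Δ ::= E_Δ⟨⟨·⟩ t⟩`. -/
structure ACtx where
  E : VECtx
  arg : VTm

def ACtx.bnd (A : ACtx) : Finset ℕ := A.E.bnd
def ACtx.fill (A : ACtx) (v : VVal) : VTm := A.E.fill (VTm.app v A.arg)

/-! ## Linear weak applicative reduction -/

inductive StepVdb : VTm → VTm → Prop
  | step (E : VECtx) (x : ℕ) (t s : VTm) :
      StepVdb (E.fill (VTm.app (VVal.lam x t) s)) (E.fill (VTm.sub t x s))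

inductive StepVls : VTm → VTm → Prop
  | step (E : VECtx) (A : ACtx) (L : VECtx) (x : ℕ) (v : VVal)
      (hL : L.isSub) (hx : x ∉ A.bnd)
      (h1 : Disjoint v.fv A.bnd)
      (h2 : Disjoint (A.fill (VVal.var x)).fv L.bnd)
      (h3 : Disjoint A.bnd L.bnd) :
      StepVls (E.fill (VTm.sub (A.fill (VVal.var x)) x (L.fill (VTm.val v))))
              (E.fill (L.fill (VTm.sub (A.fill v) x (VTm.val v))))

def StepV (t s : VTm) : Prop := StepVdb t s ∨ StepVls t s

/-! Value subterms -/

mutual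
  inductive SubT : VVal → VTm → Prop
    | val {v w} : SubV v w → SubT v (VTm.val w)
    | appL {v w t} : SubV v w → SubT v (VTm.app w t)
    | appR {v w t} : SubT v t → SubT v (VTm.app w t)
    | subL {v t x s} : SubT v t → SubT v (VTm.sub t x s)
    | subR {v t x s} : SubT v s → SubT v (VTm.sub t x s)
  inductive SubV : VVal → VVal → Prop
    | refl (v) : SubV v v
    | lam {v x t} : SubT v t → SubV v (VVal.lam x t)
end

/-! ## The call-by-value translation (relational) -/

mutual
  inductive CbvT : VTm → ℕ → Proc → Prop
    | val {v : VVal} {x a : ℕ} {P : Proc} :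
        x ∉ v.fv → CbvV v a P →
        CbvT (VTm.val v) x (Proc.rin (NV x) (NS a) P)
    | app {v : VVal} {s : VTm} {x y b : ℕ} {P Q : Proc} :
        x ∉ v.fv → x ∉ s.fv → y ∉ v.fv → y ∉ s.fv → y ≠ x →
        CbvV v b P → CbvT s y Q →
        CbvT (VTm.app v s) x
          (Proc.nu (NS b) (Proc.nu (NV y)
            (Proc.par (Proc.par P (Proc.out2 (NS b) (NV y) (NV x))) Q)))
    | sub {s u : VTm} {x y : ℕ} {P Q : Proc} :
        x ≠ y → CbvT s x P → CbvT u y Q →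
        CbvT (VTm.sub s y u) x (Proc.nu (NV y) (Proc.par P Q))
  inductive CbvV : VVal → ℕ → Proc → Prop
    | var (y a : ℕ) : CbvV (VVal.var y) a (Proc.out1 (NV y) (NS a))
    | lam {y z a : ℕ} {s : VTm} {P : Proc} :
        z ≠ y → z ∉ s.fv → CbvT s z P →
        CbvV (VVal.lam y s) a (Proc.inp (NS a) (NV y) (NV z) P)
end

lemma fill_ne_out2 (N : NCtx) (n m u v w : Name) :
    N.fill (Proc.out1 n m) ≠ Proc.out2 u v w := by
  cases N <;> simp [NCtx.fill]

lemma fill_ne_rin (N : NCtx) (n m u v : Name) (P : Proc) :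
    N.fill (Proc.out1 n m) ≠ Proc.rin u v P := by
  cases N <;> simp [NCtx.fill]

lemma cbn_aux : ∀ {t : Tm} {a : ℕ} {P : Proc}, Cbn t a P →
    ∀ (N : NCtx) (x c : ℕ), P = N.fill (Proc.out1 (NV x) (NS c)) → NV x ∉ N.bnd →
    ∃ E : ECtx, (∀ y ∈ E.bnd, NV y ∈ N.bnd) ∧ t = E.fill (Tm.var x) ∧ x ∉ E.bnd := by
  intro t a P h
  induction h with
  | var y a' =>
    intro N x c heq hb
    cases N <;> simp [NCtx.fill, NV, NS] at heq
    obtain ⟨hyx, -⟩ := heq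
    exact ⟨ECtx.hole, by simp [ECtx.bnd], by simp [ECtx.fill, hyx, NV], by simp [ECtx.bnd]⟩
  | lam hba hc ih =>
    intro N x c heq hb
    cases N <;> simp [NCtx.fill] at heq
  | @app tt ss aa bb cc xx PP QQ hba hxt hxs ht hs iht ihs =>
    intro N x c heq hb
    cases N with
    | nu n N1 =>
      simp only [NCtx.fill, Proc.nu.injEq] at heq
      obtain ⟨hn, heq⟩ := heq
      cases N1 with
      | nu n2 N2 =>
        simp only [NCtx.fill, Proc.nu.injEq] at heq
        obtain ⟨hn2, heq⟩ := heq
        cases N2 with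
        | parL N3 Q =>
          simp only [NCtx.fill, Proc.par.injEq] at heq
          obtain ⟨heq, hQ⟩ := heq
          cases N3 with
          | parL N4 Q' =>
            simp only [NCtx.fill, Proc.par.injEq] at heq
            obtain ⟨heq, hQ'⟩ := heq
            have hbnd : NV x ∉ N4.bnd := by
              intro hy; exact hb (by simp [hn, hn2, NCtx.bnd, hy])
            obtain ⟨E, hE1, hE2, hE3⟩ := iht N4 x c heq hbnd
            refine ⟨ECtx.app E ss, ?_, ?_, ?_⟩
            · intro y hy
              simp [hn, hn2, NCtx.bnd, ECtx.bnd] at *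
              exact Or.inr (Or.inr (hE1 y hy))
            · simp [ECtx.fill, hE2]
            · simpa [ECtx.bnd] using hE3
          | parR Q' N4 =>
            simp only [NCtx.fill, Proc.par.injEq] at heq
            exact absurd heq.2.symm (fill_ne_out2 _ _ _ _ _ _)
          | hole => simp [NCtx.fill] at heq
          | nu _ _ => simp [NCtx.fill] at heq
        | parR Q N3 =>
          simp only [NCtx.fill, Proc.par.injEq] at heq
          exact absurd heq.2.symm (fill_ne_rin _ _ _ _ _ _)
        | hole => simp [NCtx.fill] at heq
        | nu _ _ => simp [NCtx.fill] at heq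
      | hole => simp [NCtx.fill] at heq
      | parL _ _ => simp [NCtx.fill] at heq
      | parR _ _ => simp [NCtx.fill] at heq
    | hole => simp [NCtx.fill] at heq
    | parL _ _ => simp [NCtx.fill] at heq
    | parR _ _ => simp [NCtx.fill] at heq
  | @sub t0 s0 x0 a0 b0 P0 Q0 hxs ht hs iht ihs =>
    intro N x c heq hb
    cases N with
    | nu n N1 =>
      simp only [NCtx.fill, Proc.nu.injEq] at heq
      obtain ⟨hn, heq⟩ := heq
      cases N1 with
      | parL N2 Q =>
        simp only [NCtx.fill, Proc.par.injEq] at heq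
        obtain ⟨heq, hQ⟩ := heq
        have hbnd : NV x ∉ N2.bnd := by
          intro hy; exact hb (by simp [hn, NCtx.bnd, hy])
        obtain ⟨E, hE1, hE2, hE3⟩ := iht N2 x c heq hbnd
        have hxx0 : x ≠ x0 := by
          intro hxx; apply hb
          have hxn : NV x = n := by rw [hxx]; exact hn
          simp [NCtx.bnd, hxn]
        refine ⟨ECtx.sub E x0 s0, ?_, ?_, ?_⟩
        · intro y hy
          simp [ECtx.bnd] at hy
          simp only [NCtx.bnd, Finset.mem_insert]
          rcases hy with hy | hy
          · left; rw [hy]; exact hn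
          · right; exact hE1 y hy
        · simp [ECtx.fill, hE2]
        · simp [ECtx.bnd]
          exact ⟨hxx0, hE3⟩
      | parR Q N2 =>
        simp only [NCtx.fill, Proc.par.injEq] at heq
        exact absurd heq.2.symm (fill_ne_rin _ _ _ _ _ _)
      | hole => simp [NCtx.fill] at heq
      | nu _ _ => simp [NCtx.fill] at heq
    | hole => simp [NCtx.fill] at heq
    | parL _ _ => simp [NCtx.fill] at heq
    | parR _ _ => simp [NCtx.fill] at heq

/-- reading back an output through the CBN translation. -/
theorem stmt7 (t : Tm) (a : ℕ) (Δ Γ : Finset ℕ) (N : NCtx) (x c : ℕ)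
    (h : Cbn t a (N.fill (Proc.out1 (NV x) (NS c))))
    (hN : N.bnd = Δ.image NV ∪ Γ.image NS) (hx : x ∉ Δ) :
    ∃ (Sg : Finset ℕ) (E : ECtx),
      Sg ⊆ Δ ∧ E.bnd = Sg ∧ t = E.fill (Tm.var x) ∧ x ∉ Sg := by
  have hxb : NV x ∉ N.bnd := by
    rw [hN]
    simp [NV, NS]
    exact fun hm => hx hm
  obtain ⟨E, hE1, hE2, hE3⟩ := cbn_aux h N x c rfl hxb
  refine ⟨E.bnd, E, ?_, rfl, hE2, hE3⟩
  intro y hy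
  have := hE1 y hy
  rw [hN] at this
  simp [NV, NS] at this
  exact this
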